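/- If the restricted weak type inequality $\|\mathcal{M}(\vec{f})\|_{L^{p,\infty}(\nu)} \leq C\prod_{i=1}^m \|f_i\|_{L^{p_i,1}(w_i)}$ holds for all $\vec{f}$, then for every cube $Q$, $(\fint_Q \nu)^{1/p} \leq p_1\cdots p_m C \prod_{i=1}^m(\fint_Q w_i)^{1/p_i}$; consequently $\nu \lesssim \prod_{i=1}^m w_i^{p/p_i}$ almost everywhere. -/

import Mathlib

open MeasureTheory Set ENNReal NNReal

noncomputable section

abbrev Rn (n : ℕ) := EuclideanSpace ℝ (Fin n)

variable {n : ℕ}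

/-- The closed cube with lower-left corner `x` and side length `r`. -/
def cubeSet (x : Rn n) (r : ℝ) : Set (Rn n) := {y : Rn n | ∀ i, x i ≤ y i ∧ y i ≤ x i + r}

def IsCube (Q : Set (Rn n)) : Prop := ∃ (x : Rn n) (r : ℝ), 0 < r ∧ Q = cubeSet x r

/-- `w(E) = ∫_E w`. -/
def wInt (w : Rn n → ℝ≥0∞) (E : Set (Rn n)) : ℝ≥0∞ := ∫⁻ x in E, w x

/-- A weight: a measurable, positive, finite, locally integrable function. -/
def IsWeight (w : Rn n → ℝ≥0∞) : Prop :=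
  Measurable w ∧ (∀ x, 0 < w x ∧ w x ≠ ∞) ∧ ∀ Q : Set (Rn n), IsCube Q → wInt w Q ≠ ∞

/-- Average of `w` over `Q`. -/
def avgw (w : Rn n → ℝ≥0∞) (Q : Set (Rn n)) : ℝ≥0∞ := wInt w Q / volume Q

def A1Const (w : Rn n → ℝ≥0∞) : ℝ≥0∞ :=
  ⨆ (Q : Set (Rn n)) (_ : IsCube Q), avgw w Q * (essInf w (volume.restrict Q))⁻¹

def ApConst (p : ℝ) (w : Rn n → ℝ≥0∞) : ℝ≥0∞ :=
  ⨆ (Q : Set (Rn n)) (_ : IsCube Q),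
    avgw w Q * (avgw (fun x => w x ^ (1 - p / (p - 1))) Q) ^ (p - 1)

def MemAp (p : ℝ) (w : Rn n → ℝ≥0∞) : Prop :=
  if p = 1 then A1Const w ≠ ∞ else ApConst p w ≠ ∞

def MemAinf (w : Rn n → ℝ≥0∞) : Prop := ∃ p : ℝ, 1 ≤ p ∧ MemAp p w

def RHinfConst (w : Rn n → ℝ≥0∞) : ℝ≥0∞ :=
  ⨆ (Q : Set (Rn n)) (_ : IsCube Q), (volume Q / wInt w Q) * essSup w (volume.restrict Q)

/-- Weak `L^p` quasinorm with respect to a measure `μ`. -/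
def wkNorm {α : Type*} [MeasurableSpace α] (f : α → ℝ≥0∞) (p : ℝ) (μ : Measure α) : ℝ≥0∞ :=
  ⨆ y : ℝ≥0, (y : ℝ≥0∞) * (μ {x | (y : ℝ≥0∞) < f x}) ^ (1 / p)

/-- The measure `w(x) dx`. -/
def wMeasure (w : Rn n → ℝ≥0∞) : Measure (Rn n) := volume.withDensity w

/-- Weak `L^{p,∞}(w)` quasinorm. -/
def wkNormW (f : Rn n → ℝ≥0∞) (p : ℝ) (w : Rn n → ℝ≥0∞) : ℝ≥0∞ := wkNorm f p (wMeasure w)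

/-- Lorentz `L^{p,1}(w)` norm: `p ∫_0^∞ w({|f| > y})^{1/p} dy`. -/
def lorNorm (f : Rn n → ℝ≥0∞) (p : ℝ) (w : Rn n → ℝ≥0∞) : ℝ≥0∞ :=
  ENNReal.ofReal p * ∫⁻ y in Ioi (0 : ℝ), (wMeasure w {x | ENNReal.ofReal y < f x}) ^ (1 / p)

/-- The Hardy–Littlewood maximal operator over cubes. -/
def HLM (f : Rn n → ℝ≥0∞) (x : Rn n) : ℝ≥0∞ :=
  ⨆ (Q : Set (Rn n)) (_ : IsCube Q) (_ : x ∈ Q), (∫⁻ y in Q, f y) / volume Q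

/-- `‖w‖_{A_p^R}`. -/
def AprNorm (p : ℝ) (w : Rn n → ℝ≥0∞) : ℝ≥0∞ :=
  ⨆ (Q : Set (Rn n)) (_ : IsCube Q) (E : Set (Rn n)) (_ : MeasurableSet E) (_ : E ⊆ Q)
    (_ : 0 < wInt w E), (volume E / volume Q) * (wInt w Q / wInt w E) ^ (1 / p)

def MemApr (p : ℝ) (w : Rn n → ℝ≥0∞) : Prop := AprNorm p w ≠ ∞

/-- `L^{p',∞}(w)` norm, interpreted as `L^∞(w)` when `p = 1`. -/
def dualWkNorm (p : ℝ) (g : Rn n → ℝ≥0∞) (w : Rn n → ℝ≥0∞) : ℝ≥0∞ :=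
  if p = 1 then essSup g (wMeasure w) else wkNormW g (p / (p - 1)) w

/-- `[w]_{A_p^R}`. -/
def AprConst (p : ℝ) (w : Rn n → ℝ≥0∞) : ℝ≥0∞ :=
  ⨆ (Q : Set (Rn n)) (_ : IsCube Q),
    wInt w Q ^ (1 / p) * dualWkNorm p (Q.indicator fun x => (w x)⁻¹) w / volume Q

/-- The multi(sub)linear maximal operator `𝓜`. -/
def curlyM {m : ℕ} (f : Fin m → Rn n → ℝ≥0∞) (x : Rn n) : ℝ≥0∞ :=
  ⨆ (Q : Set (Rn n)) (_ : IsCube Q) (_ : x ∈ Q), ∏ i, (∫⁻ y in Q, f i y) / volume Q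

/-! Testing the bound on `f₁ = ⋯ = fₘ = χ_Q`: `𝓜 f ≥ 1` on `Q`, so the weak norm is at least
`ν(Q)^{1/p}`, while `‖χ_Q‖_{L^{pᵢ,1}(wᵢ)} = pᵢ wᵢ(Q)^{1/pᵢ}`; since `|Q|^{1/p} = ∏ |Q|^{1/pᵢ}`, the
same bound holds for averages. Centered cubes shrinking to `x` form a Vitali family (they are
squeezed between balls of comparable volume), so Lebesgue differentiation turns the averaged bound
into `ν(x)^{1/p} ≤ p₁⋯pₘ C ∏ wᵢ(x)^{1/pᵢ}` almost everywhere. -/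

open Metric Filter Topology

namespace ENNReal

lemma rpow_sum_of_ne_zero_of_ne_top {ι : Type*} (s : Finset ι) {a : ℝ≥0∞} (ha₀ : a ≠ 0)
    (ha : a ≠ ∞) (t : ι → ℝ) : a ^ (∑ i ∈ s, t i) = ∏ i ∈ s, a ^ t i := by
  classical
  induction s using Finset.induction_on with
  | empty => simp
  | insert j s hj ih => rw [Finset.sum_insert hj, Finset.prod_insert hj, rpow_add _ _ ha₀ ha, ih]

lemma div_rpow_le_mul_prod_div_rpow {ι : Type*} [Fintype ι] {s : ℝ} {t : ι → ℝ}
    (hst : s = ∑ i, t i) (ht : ∀ i, 0 ≤ t i) {a K V : ℝ≥0∞} {b : ι → ℝ≥0∞} (hV₀ : V ≠ 0)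
    (hV : V ≠ ∞) (h : a ^ s ≤ K * ∏ i, b i ^ t i) :
    (a / V) ^ s ≤ K * ∏ i, (b i / V) ^ t i := by
  have hs : 0 ≤ s := hst ▸ Finset.sum_nonneg fun i _ => ht i
  have hVs : V ^ s = ∏ i, V ^ t i := hst ▸ rpow_sum_of_ne_zero_of_ne_top _ hV₀ hV t
  calc (a / V) ^ s = a ^ s / V ^ s := div_rpow_of_nonneg _ _ hs
    _ ≤ K * (∏ i, b i ^ t i) / V ^ s := by gcongr
    _ = K * ∏ i, (b i / V) ^ t i := by
        rw [mul_div_assoc, hVs, ← prod_div_distrib_of_ne_zero fun i _ =>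
          (rpow_pos (pos_iff_ne_zero.2 hV₀) hV).ne']
        simp only [div_rpow_of_nonneg _ _ (ht _)]

lemma le_rpow_mul_prod_rpow_of_rpow_one_div_le {ι : Type*} [Fintype ι] {p : ℝ}
    (hp : 0 < p) {q : ι → ℝ} {a K : ℝ≥0∞} {b : ι → ℝ≥0∞}
    (h : a ^ (1 / p) ≤ K * ∏ i, b i ^ (1 / q i)) : a ≤ K ^ p * ∏ i, b i ^ (p / q i) :=
  calc a = (a ^ (1 / p)) ^ p := by rw [← rpow_mul, one_div_mul_cancel hp.ne', rpow_one]
    _ ≤ (K * ∏ i, b i ^ (1 / q i)) ^ p := rpow_le_rpow h hp.le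
    _ = K ^ p * ∏ i, b i ^ (p / q i) := by
        simp only [mul_rpow_of_nonneg _ _ hp.le, ← prod_rpow_of_nonneg hp.le, ← rpow_mul,
          one_div_mul_eq_div]

end ENNReal

lemma cubeSet_eq_preimage (x : Rn n) (r : ℝ) :
    cubeSet x r = WithLp.ofLp ⁻¹' univ.pi fun i => Icc (x i) (x i + r) := by
  ext y; simp only [cubeSet, mem_ofPred_eq, mem_preimage, mem_univ_pi, mem_Icc]

lemma measurableSet_cubeSet (x : Rn n) (r : ℝ) : MeasurableSet (cubeSet x r) := by
  rw [cubeSet_eq_preimage]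
  exact (MeasurableSet.univ_pi fun _ => measurableSet_Icc).preimage (by fun_prop)

lemma isClosed_cubeSet (x : Rn n) (r : ℝ) : IsClosed (cubeSet x r) := by
  rw [cubeSet_eq_preimage]
  exact (isClosed_set_pi fun _ _ => isClosed_Icc).preimage (PiLp.continuous_ofLp 2 _)

lemma volume_cubeSet (x : Rn n) (r : ℝ) :
    volume (cubeSet x r) = ENNReal.ofReal r ^ n := by
  rw [cubeSet_eq_preimage, ← MeasurableEquiv.coe_toLp_symm,
    (EuclideanSpace.volume_preserving_symm_measurableEquiv_toLp (Fin n)).measure_preimage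
      (MeasurableSet.univ_pi fun _ => measurableSet_Icc).nullMeasurableSet, volume_pi_pi]
  simp [Real.volume_Icc]

namespace IsCube

variable {Q : Set (Rn n)}

lemma measurableSet (hQ : IsCube Q) : MeasurableSet Q := by
  obtain ⟨x, r, -, rfl⟩ := hQ
  exact measurableSet_cubeSet x r

lemma volume_ne_zero (hQ : IsCube Q) : volume Q ≠ 0 := by
  obtain ⟨x, r, hr, rfl⟩ := hQ
  simp [volume_cubeSet x r, hr]

lemma volume_ne_top (hQ : IsCube Q) : volume Q ≠ ∞ := by
  obtain ⟨x, r, -, rfl⟩ := hQ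
  simp [volume_cubeSet x r]

end IsCube

def ctrCube (x : Rn n) (s : ℝ) : Set (Rn n) :=
  cubeSet (WithLp.toLp 2 fun i => x i - s) (2 * s)

lemma mem_ctrCube {x y : Rn n} {s : ℝ} : y ∈ ctrCube x s ↔ ∀ i, |y i - x i| ≤ s := by
  simp only [ctrCube, cubeSet, mem_ofPred_eq, abs_le]
  exact forall_congr' fun i => by constructor <;> rintro ⟨h₁, h₂⟩ <;> constructor <;> linarith

lemma isCube_ctrCube (x : Rn n) {s : ℝ} (hs : 0 < s) : IsCube (ctrCube x s) :=
  ⟨_, 2 * s, by positivity, rfl⟩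

lemma volume_ctrCube (x : Rn n) (s : ℝ) :
    volume (ctrCube x s) = ENNReal.ofReal (2 * s) ^ n :=
  volume_cubeSet _ _

lemma closedBall_subset_ctrCube (x : Rn n) (s : ℝ) : closedBall x s ⊆ ctrCube x s :=
  fun y hy => mem_ctrCube.2 fun i => (PiLp.dist_apply_le y x i).trans (mem_closedBall.1 hy)

lemma ctrCube_subset_closedBall (x : Rn n) {s : ℝ} (hs : 0 ≤ s) :
    ctrCube x s ⊆ closedBall x (s * Real.sqrt n) := by
  intro y hy
  have hsum : ∑ i, dist (y i) (x i) ^ 2 ≤ n * s ^ 2 := by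
    calc ∑ i, dist (y i) (x i) ^ 2 ≤ ∑ _i : Fin n, s ^ 2 :=
          Finset.sum_le_sum fun i _ => by
            rw [Real.dist_eq, sq_abs]
            exact sq_le_sq' (abs_le.1 (mem_ctrCube.1 hy i)).1 (abs_le.1 (mem_ctrCube.1 hy i)).2
      _ = n * s ^ 2 := by simp
  rw [mem_closedBall, EuclideanSpace.dist_eq]
  calc Real.sqrt (∑ i, dist (y i) (x i) ^ 2) ≤ Real.sqrt (n * s ^ 2) := Real.sqrt_le_sqrt hsum
    _ = s * Real.sqrt n := by rw [Real.sqrt_mul (Nat.cast_nonneg n), Real.sqrt_sq hs, mul_comm]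

lemma ctrCube_mem_nhds (x : Rn n) {s : ℝ} (hs : 0 < s) : ctrCube x s ∈ 𝓝 x :=
  Filter.mem_of_superset (closedBall_mem_nhds x hs) (closedBall_subset_ctrCube x s)

/-- The constant `(3 √n)ⁿ`: a ball of radius `3 s √n` lies in a cube of half-side `3 s √n`, whose
volume is `(3 √n)ⁿ` times that of the cube of half-side `s` around the same center. -/
def cubeVitaliConst (n : ℕ) : ℝ≥0 := ((3 * Real.sqrt n) ^ n).toNNReal

lemma volume_closedBall_three_mul_le (x : Rn n) {r : ℝ} (hr : 0 ≤ r) :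
    volume (closedBall x (3 * r)) ≤ cubeVitaliConst n * volume (closedBall x r) := by
  rw [Measure.addHaar_closedBall_mul volume x (by norm_num) hr,
    ← Measure.addHaar_closedBall_center volume x r, finrank_euclideanSpace_fin]
  gcongr
  rcases Nat.eq_zero_or_pos n with rfl | hn
  · simp [cubeVitaliConst]
  · refine ENNReal.ofReal_le_ofReal (pow_le_pow_left₀ (by norm_num) ?_ n)
    nlinarith [Real.one_le_sqrt.2 (Nat.one_le_cast.2 hn : (1 : ℝ) ≤ n)]

lemma volume_closedBall_le_ctrCube (x : Rn n) (s : ℝ) :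
    volume (closedBall x (3 * (s * Real.sqrt n))) ≤ cubeVitaliConst n * volume (ctrCube x s) :=
  calc volume (closedBall x (3 * (s * Real.sqrt n)))
      ≤ volume (ctrCube x (3 * (s * Real.sqrt n))) :=
        measure_mono (closedBall_subset_ctrCube _ _)
    _ = cubeVitaliConst n * volume (ctrCube x s) := by
        rw [volume_ctrCube, volume_ctrCube, show 2 * (3 * (s * Real.sqrt n))
          = 3 * Real.sqrt n * (2 * s) by ring, ENNReal.ofReal_mul (by positivity), mul_pow,
          ← ENNReal.ofReal_pow (by positivity)]
        rfl

def cubeVitaliFamily (n : ℕ) : VitaliFamily (volume : Measure (Rn n)) :=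
  Vitali.vitaliFamily volume (cubeVitaliConst n) fun x =>
    Eventually.frequently <| eventually_nhdsWithin_of_forall fun _ hr =>
      volume_closedBall_three_mul_le x (le_of_lt hr)

lemma ctrCube_mem_setsAt (x : Rn n) {s : ℝ} (hs : 0 < s) :
    ctrCube x s ∈ (cubeVitaliFamily n).setsAt x :=
  ⟨isClosed_cubeSet _ _,
    ⟨x, mem_interior.2 ⟨ball x s, ball_subset_closedBall.trans (closedBall_subset_ctrCube x s),
      isOpen_ball, mem_ball_self hs⟩⟩,
    s * Real.sqrt n, ctrCube_subset_closedBall x hs.le, volume_closedBall_le_ctrCube x s⟩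

lemma tendsto_ctrCube_filterAt (x : Rn n) :
    Tendsto (fun k : ℕ => ctrCube x (1 / (k + 1 : ℝ))) atTop ((cubeVitaliFamily n).filterAt x) := by
  rw [VitaliFamily.tendsto_filterAt_iff]
  refine ⟨Eventually.of_forall fun k => ctrCube_mem_setsAt x (by positivity), fun ε hε => ?_⟩
  have hlim : Tendsto (fun k : ℕ => 1 / (k + 1 : ℝ) * Real.sqrt n) atTop (𝓝 0) := by
    simpa using tendsto_one_div_add_atTop_nhds_zero_nat.mul_const (Real.sqrt n)
  filter_upwards [hlim.eventually (gt_mem_nhds hε)] with k hk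
  exact (ctrCube_subset_closedBall x (by positivity)).trans (closedBall_subset_closedBall hk.le)

lemma ae_tendsto_avgw_ctrCube {w : Rn n → ℝ≥0∞} (hw : Measurable w)
    (hloc : ∀ Q, IsCube Q → wInt w Q ≠ ∞) :
    ∀ᵐ x, Tendsto (fun k : ℕ => avgw w (ctrCube x (1 / (k + 1 : ℝ)))) atTop (𝓝 (w x)) := by
  have : IsLocallyFiniteMeasure (volume.withDensity w) := ⟨fun x =>
    ⟨ctrCube x 1, ctrCube_mem_nhds x one_pos, by
      rw [withDensity_apply _ (isCube_ctrCube x one_pos).measurableSet]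
      exact (hloc _ (isCube_ctrCube x one_pos)).lt_top⟩⟩
  filter_upwards [(cubeVitaliFamily n).ae_tendsto_rnDeriv (volume.withDensity w),
    Measure.rnDeriv_withDensity volume hw] with x hx hrn
  rw [hrn] at hx
  refine (hx.comp (tendsto_ctrCube_filterAt x)).congr fun k => ?_
  simp only [Function.comp_apply, avgw, wInt,
    withDensity_apply _ (isCube_ctrCube x (by positivity : (0 : ℝ) < 1 / (k + 1))).measurableSet]

lemma wMeasure_apply (w : Rn n → ℝ≥0∞) {E : Set (Rn n)} (hE : MeasurableSet E) :
    wMeasure w E = wInt w E :=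
  withDensity_apply w hE

lemma one_le_curlyM_indicator {m : ℕ} {Q : Set (Rn n)} (hQ : IsCube Q) {x : Rn n} (hx : x ∈ Q) :
    1 ≤ curlyM (fun _ : Fin m => Q.indicator 1) x := by
  have hQ1 : (∫⁻ y in Q, Q.indicator 1 y) / volume Q = 1 := by
    rw [lintegral_indicator_one hQ.measurableSet, Measure.restrict_apply_self,
      ENNReal.div_self hQ.volume_ne_zero hQ.volume_ne_top]
  refine le_iSup_of_le Q (le_iSup_of_le hQ (le_iSup_of_le hx ?_))
  simp [hQ1]

lemma rpow_measure_le_wkNorm {α : Type*} [MeasurableSpace α] {μ : Measure α} {f : α → ℝ≥0∞}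
    {E : Set α} (hE : ∀ x ∈ E, 1 ≤ f x) {p : ℝ} (hp : 0 ≤ p) :
    μ E ^ (1 / p) ≤ wkNorm f p μ := by
  refine ENNReal.le_of_forall_lt_one_mul_le fun a ha => ?_
  lift a to ℝ≥0 using ha.ne_top
  calc (a : ℝ≥0∞) * μ E ^ (1 / p) ≤ a * μ {x | (a : ℝ≥0∞) < f x} ^ (1 / p) := by
        gcongr
        exact fun x hx => ha.trans_le (hE x hx)
    _ ≤ wkNorm f p μ := le_iSup (fun y : ℝ≥0 => (y : ℝ≥0∞) * μ {x | (y : ℝ≥0∞) < f x} ^ (1 / p)) a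

lemma lorNorm_indicator_one (E : Set (Rn n)) {q : ℝ} (hq : 0 < q) (w : Rn n → ℝ≥0∞) :
    lorNorm (E.indicator 1) q w = ENNReal.ofReal q * wMeasure w E ^ (1 / q) := by
  have hlevel : ∀ y ∈ Ioi (0 : ℝ), wMeasure w {x | ENNReal.ofReal y < E.indicator 1 x} ^ (1 / q)
      = (Iio 1).indicator (fun _ => wMeasure w E ^ (1 / q)) y := by
    intro y hy
    by_cases hy1 : y < 1
    · have : {x | ENNReal.ofReal y < E.indicator 1 x} = E := by
        ext x; by_cases hx : x ∈ E <;> simp [hx, hy1, ENNReal.ofReal_lt_one]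
      simp [this, hy1]
    · have : {x | ENNReal.ofReal y < E.indicator 1 x} = ∅ := by
        ext x; by_cases hx : x ∈ E <;> simp [hx, hy1, ENNReal.ofReal_lt_one]
      simp [this, hy1, hq]
  rw [lorNorm, setLIntegral_congr_fun measurableSet_Ioi hlevel,
    lintegral_indicator measurableSet_Iio, setLIntegral_const,
    Measure.restrict_apply measurableSet_Iio, Iio_inter_Ioi, Real.volume_Ioo]
  simp

lemma wInt_rpow_le_of_restrictedWeakType {m : ℕ} {pp : Fin m → ℝ} (hpp : ∀ i, 0 < pp i) {p : ℝ}
    (hp : 0 ≤ p) {w : Fin m → Rn n → ℝ≥0∞} {ν : Rn n → ℝ≥0∞} {C : ℝ≥0}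
    (hC : ∀ f : Fin m → Rn n → ℝ≥0∞, (∀ i, Measurable (f i)) →
      wkNormW (curlyM f) p ν ≤ C * ∏ i, lorNorm (f i) (pp i) (w i))
    {Q : Set (Rn n)} (hQ : IsCube Q) :
    wInt ν Q ^ (1 / p) ≤ ENNReal.ofReal (∏ i, pp i) * C * ∏ i, wInt (w i) Q ^ (1 / pp i) :=
  calc wInt ν Q ^ (1 / p)
      ≤ wkNormW (curlyM fun _ : Fin m => Q.indicator 1) p ν := by
        rw [← wMeasure_apply ν hQ.measurableSet]
        exact rpow_measure_le_wkNorm (fun x hx => one_le_curlyM_indicator hQ hx) hp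
    _ ≤ C * ∏ i, lorNorm (Q.indicator 1) (pp i) (w i) :=
        hC _ fun _ => measurable_one.indicator hQ.measurableSet
    _ = ENNReal.ofReal (∏ i, pp i) * C * ∏ i, wInt (w i) Q ^ (1 / pp i) := by
        simp only [lorNorm_indicator_one _ (hpp _), wMeasure_apply _ hQ.measurableSet,
          Finset.prod_mul_distrib, ENNReal.ofReal_prod_of_nonneg fun i _ => (hpp i).le]
        ring

lemma ae_rpow_le_mul_prod_rpow_of_avgw {ι : Type*} [Fintype ι] {ν : Rn n → ℝ≥0∞}
    (hν : IsWeight ν) {w : ι → Rn n → ℝ≥0∞} (hw : ∀ i, IsWeight (w i)) {q : ℝ} {r : ι → ℝ}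
    {K : ℝ≥0} (h : ∀ Q, IsCube Q → avgw ν Q ^ q ≤ K * ∏ i, avgw (w i) Q ^ r i) :
    ∀ᵐ x, ν x ^ q ≤ K * ∏ i, w i x ^ r i := by
  filter_upwards [ae_tendsto_avgw_ctrCube hν.1 hν.2.2,
    ae_all_iff.2 fun i => ae_tendsto_avgw_ctrCube (hw i).1 (hw i).2.2] with x hνx hwx
  have hwx_ne_top : ∀ i, w i x ^ r i ≠ ∞ := fun i =>
    ENNReal.rpow_ne_top_of_ne_zero ((hw i).2.1 x).1.ne' ((hw i).2.1 x).2
  refine le_of_tendsto_of_tendsto' ((ENNReal.continuous_rpow_const.tendsto _).comp hνx)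
    (ENNReal.Tendsto.const_mul (ENNReal.tendsto_finsetProd_of_ne_top _
      (fun i _ => (ENNReal.continuous_rpow_const.tendsto _).comp (hwx i))
      fun i _ => hwx_ne_top i) (Or.inr ENNReal.coe_ne_top))
    fun k => h _ (isCube_ctrCube x (by positivity))

/-- Necessary condition from the restricted weak type bound of `𝓜`:
`(⨍_Q ν)^{1/p} ≤ p_1⋯p_m C ∏ (⨍_Q w_i)^{1/p_i}`, whence `ν ≲ ∏ w_i^{p/p_i}` a.e. -/
theorem stmt16 {n : ℕ} (m : ℕ) (hm : 1 ≤ m) (pp : Fin m → ℝ) (hpp : ∀ i, 1 ≤ pp i)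
    (p : ℝ) (hp : p⁻¹ = ∑ i, (pp i)⁻¹)
    (w : Fin m → Rn n → ℝ≥0∞) (hw : ∀ i, IsWeight (w i))
    (ν : Rn n → ℝ≥0∞) (hν : IsWeight ν) (C : ℝ≥0)
    (hC : ∀ f : Fin m → Rn n → ℝ≥0∞, (∀ i, Measurable (f i)) →
      wkNormW (curlyM f) p ν ≤ C * ∏ i, lorNorm (f i) (pp i) (w i)) :
    (∀ Q : Set (Rn n), IsCube Q →
      avgw ν Q ^ (1 / p) ≤
        ENNReal.ofReal (∏ i, pp i) * C * ∏ i, avgw (w i) Q ^ (1 / pp i)) ∧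
    ∃ C' : ℝ≥0, ∀ᵐ x ∂(volume : Measure (Rn n)),
      ν x ≤ C' * ∏ i, w i x ^ (p / pp i) := by
  have hpp_pos : ∀ i, 0 < pp i := fun i => one_pos.trans_le (hpp i)
  have hp_pos : 0 < p := by
    have : Nonempty (Fin m) := Fin.pos_iff_nonempty.1 hm
    rw [← inv_pos, hp]
    exact Finset.sum_pos (fun i _ => inv_pos.2 (hpp_pos i)) Finset.univ_nonempty
  have hcube : ∀ Q : Set (Rn n), IsCube Q →
      avgw ν Q ^ (1 / p) ≤ ENNReal.ofReal (∏ i, pp i) * C * ∏ i, avgw (w i) Q ^ (1 / pp i) :=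
    fun Q hQ => ENNReal.div_rpow_le_mul_prod_div_rpow (by simpa only [one_div] using hp)
      (fun i => (one_div_pos.2 (hpp_pos i)).le) hQ.volume_ne_zero hQ.volume_ne_top
      (wInt_rpow_le_of_restrictedWeakType hpp_pos hp_pos.le hC hQ)
  refine ⟨hcube, ((∏ i, pp i).toNNReal * C) ^ p, ?_⟩
  filter_upwards [ae_rpow_le_mul_prod_rpow_of_avgw (K := (∏ i, pp i).toNNReal * C) hν hw hcube]
    with x hx
  rw [ENNReal.coe_rpow_of_nonneg _ hp_pos.le]
  exact ENNReal.le_rpow_mul_prod_rpow_of_rpow_one_div_le hp_pos hx
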